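/- For a streak X, the following are equivalent: (1) X is dense, i.e., for all rationals q < r there exists x ∈ X with q < x < r; (2) there exists an element of X that is < 0, and X has the interpolation property: for all a, b ∈ X with a < b there exists x ∈ X with a < x < b; (3) there exists an element of X that is < 0 and an element x ∈ X with 0 < x < 1; (4) there exists z ∈ X with −1 < z < 0. -/

import Mathlib

/-- A prestreak: a strict order (asymmetric and cotransitive) together with a
commutative additive monoid structure and a commutative multiplicative monoid
structure on the positive part, compatible with the order.  (The intrinsic
topology conditions of the paper are omitted, being vacuous in the classical
set-theoretic setting.) -/
structure Prestreak (X : Type*) where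
  lt : X → X → Prop
  add : X → X → X
  zero : X
  mul : X → X → X
  one : X
  lt_asymm : ∀ a b, ¬ (lt a b ∧ lt b a)
  lt_cotrans : ∀ a b x, lt a b → lt a x ∨ lt x b
  add_comm : ∀ a b, add a b = add b a
  add_assoc : ∀ a b c, add (add a b) c = add a (add b c)
  add_zero : ∀ a, add a zero = a
  zero_lt_one : lt zero one
  mul_pos : ∀ a b, lt zero a → lt zero b → lt zero (mul a b)
  mul_comm : ∀ a b, lt zero a → lt zero b → mul a b = mul b a
  mul_assoc : ∀ a b c, lt zero a → lt zero b → lt zero c →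
    mul (mul a b) c = mul a (mul b c)
  mul_one : ∀ a, lt zero a → mul a one = a
  mul_add : ∀ a b c, lt zero a → lt zero b → lt zero c →
    mul (add a b) c = add (mul a c) (mul b c)
  add_lt_add_iff : ∀ a b x, (lt (add a x) (add b x) ↔ lt a b)
  mul_lt_mul_iff : ∀ a b x, lt zero a → lt zero b → lt zero x →
    (lt (mul a x) (mul b x) ↔ lt a b)

namespace Prestreak

variable {X : Type*}

/-- Multiplication by a natural number: `0·a = 0`, `(n+1)·a = n·a + a`. -/
def nsmul (P : Prestreak X) : ℕ → X → X
  | 0, _ => P.zero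
  | n + 1, a => P.add (nsmul P n a) a

/-- The canonical image of a natural number, `n ↦ n·1`. -/
def ofNat (P : Prestreak X) (n : ℕ) : X := P.nsmul n P.one

/-- Comparison `x < q` of an element of a prestreak with a rational number,
using the canonical representation `q = (q.num⁺ − q.num⁻)/q.den`:
`x < (a−b)/c  :=  c·x + b < a`. -/
def ltQ (P : Prestreak X) (x : X) (q : ℚ) : Prop :=
  P.lt (P.add (P.nsmul q.den x) (P.ofNat ((-q.num).toNat))) (P.ofNat q.num.toNat)

/-- Comparison `q < x` of a rational with an element of a prestreak:
`(a−b)/c < x  :=  a < c·x + b`. -/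
def qLt (P : Prestreak X) (q : ℚ) (x : X) : Prop :=
  P.lt (P.ofNat q.num.toNat) (P.add (P.nsmul q.den x) (P.ofNat ((-q.num).toNat)))

/-- The archimedean property for prestreaks. -/
def Archimedean (P : Prestreak X) : Prop :=
  ∀ a b c d : X, P.lt b d →
    ∃ n : ℕ, P.lt (P.add a (P.nsmul n b)) (P.add c (P.nsmul n d))

/-- Tightness: antisymmetry of `≤` (where `a ≤ b := ¬ b < a`).
A streak is a tight archimedean prestreak. -/
def Tight (P : Prestreak X) : Prop :=
  ∀ a b : X, ¬ P.lt a b → ¬ P.lt b a → a = b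

/-- The apartness relation `a # b := a < b ∨ b < a`. -/
def Apart (P : Prestreak X) (a b : X) : Prop := P.lt a b ∨ P.lt b a

/-- A morphism of prestreaks: preserves `<`, `+`, `0`, `1` and products of
positive elements. -/
def IsHom {Y : Type*} (P : Prestreak X) (Q : Prestreak Y) (f : X → Y) : Prop :=
  (∀ a b, P.lt a b → Q.lt (f a) (f b)) ∧
  (∀ a b, f (P.add a b) = Q.add (f a) (f b)) ∧
  f P.zero = Q.zero ∧ f P.one = Q.one ∧
  (∀ a b, P.lt P.zero a → P.lt P.zero b → f (P.mul a b) = Q.mul (f a) (f b))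

/-- A multiplicative structure on a prestreak: a total multiplication which is
commutative, associative, distributes over addition, has unit `1`, restricts to
the given multiplication on positive elements, and satisfies the multiplicity
condition. -/
def IsMultiplicative (P : Prestreak X) (tmul : X → X → X) : Prop :=
  (∀ a b, tmul a b = tmul b a) ∧
  (∀ a b c, tmul (tmul a b) c = tmul a (tmul b c)) ∧
  (∀ a b c, tmul (P.add a b) c = P.add (tmul a c) (tmul b c)) ∧
  (∀ a, tmul a P.one = a) ∧
  (∀ a b, P.lt P.zero a → P.lt P.zero b → tmul a b = P.mul a b) ∧
  (∀ a b c d, P.lt b a → P.lt d c →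
    P.lt (P.add (tmul a d) (tmul b c)) (P.add (tmul a c) (tmul b d)))

end Prestreak

/-!
Of the four implications only (3) ⇒ (4) and (4) ⇒ (1) have substance; both are "walk in small
steps and stop at the first crossing" arguments, made possible by the archimedean property, with
cotransitivity standing in for trichotomy at the crossing.

(3) ⇒ (4): from `a < 0` walk upwards in steps `0 < x < 1`; at the last point `z` below `0` we have
`0 ≤ z + x < z + 1`, so `-1 < z < 0`.

(4) ⇒ (1): `p = z + 1` lies in `(0, 1)`, hence below a rational `s < 1`, so the powers of `p` give
positive elements below any rational `ε > 0`. Given `q < r`, start below `q` (a multiple of `z`)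
and walk in steps `u < r - q`: the first point above `q` is still below `r`.
-/

theorem Rat.exists_eq_sub_div_of_lt {q r : ℚ} (h : q < r) :
    ∃ A B C k : ℕ, 0 < C ∧ 0 < k ∧
      q = ((A : ℚ) - B) / C ∧ r = (((A + k : ℕ) : ℚ) - B) / C := by
  have hq : q * (q.den * r.den : ℕ) = (q.num * r.den : ℤ) := by
    push_cast; rw [← Rat.mul_den_eq_num]; ring
  have hr : r * (q.den * r.den : ℕ) = (r.num * q.den : ℤ) := by
    push_cast; rw [← Rat.mul_den_eq_num]; ring
  have hlt : q.num * r.den < r.num * q.den := (Rat.lt_iff q r).1 h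
  generalize q.num * r.den = m₁ at hq hlt
  generalize r.num * q.den = m₂ at hr hlt
  refine ⟨m₁.toNat, (-m₁).toNat, q.den * r.den, (m₂ - m₁).toNat, by positivity, by omega,
    ?_, ?_⟩
  · rw [eq_div_iff (by positivity), hq]
    exact_mod_cast (by omega : m₁ = (m₁.toNat : ℤ) - ((-m₁).toNat : ℤ))
  · rw [eq_div_iff (by positivity), hr]
    exact_mod_cast
      (by omega : m₂ = ((m₁.toNat + (m₂ - m₁).toNat : ℕ) : ℤ) - ((-m₁).toNat : ℤ))

theorem Rat.exists_eq_div_of_pos {s : ℚ} (hs : 0 < s) :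
    ∃ A C : ℕ, 0 < A ∧ 0 < C ∧ s = (A : ℚ) / C := by
  have hnum : 0 < s.num := Rat.num_pos.2 hs
  refine ⟨s.num.toNat, s.den, by omega, s.den_pos, ?_⟩
  rw [← Int.cast_natCast, Int.toNat_of_nonneg hnum.le, Rat.num_div_den]

namespace Prestreak

variable {X : Type*} (P : Prestreak X)

theorem lt_irrefl (a : X) : ¬ P.lt a a := fun h => P.lt_asymm a a ⟨h, h⟩

theorem lt_trans {a b c : X} (hab : P.lt a b) (hbc : P.lt b c) : P.lt a c :=
  (P.lt_cotrans a b c hab).resolve_right fun hcb => P.lt_asymm b c ⟨hbc, hcb⟩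

theorem lt_of_not_lt_of_lt {a b c : X} (hba : ¬ P.lt b a) (hbc : P.lt b c) : P.lt a c :=
  (P.lt_cotrans b c a hbc).resolve_left hba

theorem zero_add (a : X) : P.add P.zero a = a := (P.add_comm _ _).trans (P.add_zero a)

/-- Not an instance, as it depends on `P`: proofs install it with `let` and rewrite `P.add`,
`P.nsmul`, `P.ofNat` with the `_def` lemmas below, so that `abel` and Mathlib's `nsmul` lemmas
apply. -/
abbrev toAddCommMonoid : AddCommMonoid X where
  add := P.add
  zero := P.zero
  add_assoc := P.add_assoc
  zero_add := P.zero_add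
  add_zero := P.add_zero
  add_comm := P.add_comm
  nsmul := P.nsmul
  nsmul_zero _ := rfl
  nsmul_succ _ _ := rfl

theorem add_def (a b : X) : P.add a b = (letI := P.toAddCommMonoid; a + b) := rfl

theorem nsmul_def (n : ℕ) (a : X) : P.nsmul n a = (letI := P.toAddCommMonoid; n • a) := rfl

theorem ofNat_def (n : ℕ) : P.ofNat n = (letI := P.toAddCommMonoid; n • P.one) := rfl

theorem nsmul_one (a : X) : P.nsmul 1 a = a := P.zero_add a

theorem zero_nsmul (a : X) : P.nsmul 0 a = P.zero := rfl

theorem nsmul_zero (n : ℕ) : P.nsmul n P.zero = P.zero := by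
  let := P.toAddCommMonoid
  exact _root_.nsmul_zero n

theorem ofNat_zero : P.ofNat 0 = P.zero := rfl

theorem ofNat_one : P.ofNat 1 = P.one := P.nsmul_one P.one

theorem ofNat_add (m n : ℕ) : P.ofNat (m + n) = P.add (P.ofNat m) (P.ofNat n) := by
  let := P.toAddCommMonoid
  exact add_nsmul P.one m n

theorem nsmul_ofNat (m n : ℕ) : P.nsmul m (P.ofNat n) = P.ofNat (m * n) := by
  let := P.toAddCommMonoid
  exact (mul_nsmul' P.one m n).symm

theorem nsmul_nsmul (m n : ℕ) (a : X) : P.nsmul m (P.nsmul n a) = P.nsmul (m * n) a := by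
  let := P.toAddCommMonoid
  exact (mul_nsmul' a m n).symm

theorem add_lt_add_right {a b : X} (h : P.lt a b) (c : X) : P.lt (P.add a c) (P.add b c) :=
  (P.add_lt_add_iff a b c).2 h

theorem lt_of_add_lt_add_right {a b c : X} (h : P.lt (P.add a c) (P.add b c)) : P.lt a b :=
  (P.add_lt_add_iff a b c).1 h

theorem add_lt_add_iff_left {a b : X} (c : X) : P.lt (P.add c a) (P.add c b) ↔ P.lt a b := by
  rw [P.add_comm c a, P.add_comm c b]
  exact P.add_lt_add_iff a b c

theorem add_lt_add_left {a b : X} (h : P.lt a b) (c : X) : P.lt (P.add c a) (P.add c b) :=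
  (P.add_lt_add_iff_left c).2 h

theorem add_lt_add {a b c d : X} (hab : P.lt a b) (hcd : P.lt c d) :
    P.lt (P.add a c) (P.add b d) :=
  P.lt_trans (P.add_lt_add_right hab c) (P.add_lt_add_left hcd b)

theorem nsmul_lt_nsmul {a b : X} (h : P.lt a b) :
    ∀ {n : ℕ}, 0 < n → P.lt (P.nsmul n a) (P.nsmul n b)
  | 1, _ => by rwa [P.nsmul_one, P.nsmul_one]
  | n + 2, _ => P.add_lt_add (nsmul_lt_nsmul h n.succ_pos) h

theorem lt_of_nsmul_lt_nsmul {a b : X} :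
    ∀ {n : ℕ}, P.lt (P.nsmul n a) (P.nsmul n b) → P.lt a b
  | 0, h => absurd h (P.lt_irrefl _)
  | n + 1, h => (P.lt_cotrans _ _ (P.add (P.nsmul n b) a) h).elim
      (fun h' => lt_of_nsmul_lt_nsmul (P.lt_of_add_lt_add_right h'))
      (fun h' => (P.add_lt_add_iff_left _).1 h')

theorem nsmul_lt_nsmul_iff {a b : X} {n : ℕ} (hn : 0 < n) :
    P.lt (P.nsmul n a) (P.nsmul n b) ↔ P.lt a b :=
  ⟨P.lt_of_nsmul_lt_nsmul, fun h => P.nsmul_lt_nsmul h hn⟩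

theorem nsmul_pos {a : X} (ha : P.lt P.zero a) {n : ℕ} (hn : 0 < n) :
    P.lt P.zero (P.nsmul n a) := by
  simpa only [P.nsmul_zero] using P.nsmul_lt_nsmul ha hn

theorem nsmul_neg {a : X} (ha : P.lt a P.zero) {n : ℕ} (hn : 0 < n) :
    P.lt (P.nsmul n a) P.zero := by
  simpa only [P.nsmul_zero] using P.nsmul_lt_nsmul ha hn

theorem ofNat_lt_ofNat {m n : ℕ} (h : m < n) : P.lt (P.ofNat m) (P.ofNat n) := by
  obtain ⟨k, rfl⟩ := Nat.exists_eq_add_of_lt h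
  have hk : P.lt P.zero (P.ofNat (k + 1)) := P.nsmul_pos P.zero_lt_one k.succ_pos
  simpa only [P.add_zero, ← P.ofNat_add, ← Nat.add_assoc] using P.add_lt_add_left hk (P.ofNat m)

theorem ofNat_lt_ofNat_iff {m n : ℕ} : P.lt (P.ofNat m) (P.ofNat n) ↔ m < n := by
  refine ⟨fun h => ?_, P.ofNat_lt_ofNat⟩
  by_contra! hnm
  rcases hnm.eq_or_lt with rfl | hnm
  · exact P.lt_irrefl _ h
  · exact P.lt_asymm _ _ ⟨h, P.ofNat_lt_ofNat hnm⟩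

theorem lt_iff_lt_of_nsmul_add_eq {u v u' v' : X} {c d : ℕ} (hc : 0 < c) (hd : 0 < d)
    (h : P.add (P.nsmul c u) (P.nsmul d v') = P.add (P.nsmul c v) (P.nsmul d u')) :
    P.lt u v ↔ P.lt u' v' :=
  calc P.lt u v
      ↔ P.lt (P.add (P.nsmul c u) (P.nsmul d v')) (P.add (P.nsmul c v) (P.nsmul d v')) :=
        (P.nsmul_lt_nsmul_iff hc).symm.trans (P.add_lt_add_iff _ _ _).symm
    _ ↔ P.lt (P.add (P.nsmul c v) (P.nsmul d u')) (P.add (P.nsmul c v) (P.nsmul d v')) := by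
        rw [h]
    _ ↔ P.lt u' v' := (P.add_lt_add_iff_left _).trans (P.nsmul_lt_nsmul_iff hd)

/-- The hypothesis of `lt_iff_lt_of_nsmul_add_eq` for the canonical representation of `q` and
`q = (A - B) / C`. -/
theorem cross_eq_of_eq_sub_div (x : X) {q : ℚ} {A B C : ℕ} (hC : 0 < C)
    (hq : q = ((A : ℚ) - B) / C) :
    P.add (P.nsmul C (P.add (P.nsmul q.den x) (P.ofNat (-q.num).toNat)))
        (P.nsmul q.den (P.ofNat A))
      = P.add (P.nsmul C (P.ofNat q.num.toNat))
        (P.nsmul q.den (P.add (P.nsmul C x) (P.ofNat B))) := by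
  have hnum : (q.num : ℚ) * C = q.den * ((A : ℚ) - B) := by
    rw [← Rat.mul_den_eq_num, hq]
    field_simp
  have hnum' : q.num * C = q.den * ((A : ℤ) - B) := by exact_mod_cast hnum
  have key : C * (-q.num).toNat + q.den * A = C * q.num.toNat + q.den * B := by
    have : (q.num.toNat : ℤ) - (-q.num).toNat = q.num := by omega
    zify
    linear_combination -hnum' - (C : ℤ) * this
  let := P.toAddCommMonoid
  simp only [add_def, nsmul_def, ofNat_def, smul_add, smul_smul]
  rw [_root_.add_assoc, ← add_nsmul, key, add_nsmul, Nat.mul_comm C q.den]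
  abel

theorem ltQ_iff {x : X} {q : ℚ} {A B C : ℕ} (hC : 0 < C) (hq : q = ((A : ℚ) - B) / C) :
    P.ltQ x q ↔ P.lt (P.add (P.nsmul C x) (P.ofNat B)) (P.ofNat A) :=
  P.lt_iff_lt_of_nsmul_add_eq hC q.den_pos (P.cross_eq_of_eq_sub_div x hC hq)

theorem qLt_iff {x : X} {q : ℚ} {A B C : ℕ} (hC : 0 < C) (hq : q = ((A : ℚ) - B) / C) :
    P.qLt q x ↔ P.lt (P.ofNat A) (P.add (P.nsmul C x) (P.ofNat B)) :=
  P.lt_iff_lt_of_nsmul_add_eq hC q.den_pos (P.cross_eq_of_eq_sub_div x hC hq).symm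

theorem ltQ_iff_of_eq_div {x : X} {q : ℚ} {A C : ℕ} (hC : 0 < C) (hq : q = (A : ℚ) / C) :
    P.ltQ x q ↔ P.lt (P.nsmul C x) (P.ofNat A) := by
  rw [P.ltQ_iff (B := 0) hC (by simpa using hq), P.ofNat_zero, P.add_zero]

theorem ltQ_zero_iff {x : X} : P.ltQ x 0 ↔ P.lt x P.zero := by
  rw [P.ltQ_iff_of_eq_div (A := 0) one_pos (by simp), P.nsmul_one, P.ofNat_zero]

theorem qLt_zero_iff {x : X} : P.qLt 0 x ↔ P.lt P.zero x := by
  rw [P.qLt_iff (A := 0) (B := 0) one_pos (by simp), P.nsmul_one, P.ofNat_zero, P.add_zero]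

theorem ltQ_one_iff {x : X} : P.ltQ x 1 ↔ P.lt x P.one := by
  rw [P.ltQ_iff_of_eq_div (A := 1) one_pos (by simp), P.nsmul_one, P.ofNat_one]

theorem qLt_neg_one_iff {x : X} : P.qLt (-1) x ↔ P.lt P.zero (P.add x P.one) := by
  rw [P.qLt_iff (A := 0) (B := 1) one_pos (by simp), P.nsmul_one, P.ofNat_zero, P.ofNat_one]

theorem qLt_ofNat_iff {q : ℚ} {n : ℕ} : P.qLt q (P.ofNat n) ↔ q < n := by
  rw [qLt, P.nsmul_ofNat, ← P.ofNat_add, P.ofNat_lt_ofNat_iff, Rat.lt_iff, Rat.den_natCast,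
    Rat.num_natCast]
  have : (q.num.toNat : ℤ) - (-q.num).toNat = q.num := by omega
  zify
  constructor <;> intro h <;> linarith

theorem lt_of_ltQ_of_qLt {x y : X} {q : ℚ} (hx : P.ltQ x q) (hy : P.qLt q y) : P.lt x y :=
  P.lt_of_nsmul_lt_nsmul (P.lt_of_add_lt_add_right (P.lt_trans hx hy))

theorem ltQ_of_ltQ_of_lt {x : X} {q r : ℚ} (hx : P.ltQ x q) (hqr : q < r) : P.ltQ x r := by
  obtain ⟨A, B, C, k, hC, hk, rfl, rfl⟩ := Rat.exists_eq_sub_div_of_lt hqr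
  rw [P.ltQ_iff hC rfl] at hx ⊢
  exact P.lt_trans hx (P.ofNat_lt_ofNat (by omega))

theorem lt_of_qLt_of_ltQ {x : X} {q r : ℚ} (hx : P.qLt r x) (hx' : P.ltQ x q) : r < q := by
  by_contra! h
  rcases h.lt_or_eq with h | rfl
  · exact P.lt_asymm _ _ ⟨P.ltQ_of_ltQ_of_lt hx' h, hx⟩
  · exact P.lt_asymm _ _ ⟨hx', hx⟩

theorem ltQ_add_of_not_qLt {y u : X} {q r : ℚ} (hqr : q < r) (hy : ¬ P.qLt q y)
    (hu : P.ltQ u (r - q)) : P.ltQ (P.add y u) r := by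
  obtain ⟨A, B, C, k, hC, -, rfl, rfl⟩ := Rat.exists_eq_sub_div_of_lt hqr
  rw [P.qLt_iff hC rfl] at hy
  rw [P.ltQ_iff_of_eq_div (A := k) hC (by push_cast; ring)] at hu
  rw [P.ltQ_iff hC rfl, P.ofNat_add]
  have hsplit : P.add (P.nsmul C (P.add y u)) (P.ofNat B)
      = P.add (P.add (P.nsmul C y) (P.ofNat B)) (P.nsmul C u) := by
    let := P.toAddCommMonoid
    simp only [add_def, nsmul_def, smul_add]
    abel
  rw [hsplit]
  exact P.lt_of_not_lt_of_lt (mt P.lt_of_add_lt_add_right hy) (P.add_lt_add_left hu _)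

theorem mul_nsmul_left {x y : X} (hx : P.lt P.zero x) (hy : P.lt P.zero y) :
    ∀ {n : ℕ}, 0 < n → P.mul (P.nsmul n x) y = P.nsmul n (P.mul x y)
  | 1, _ => by rw [P.nsmul_one, P.nsmul_one]
  | n + 2, _ => by
    rw [show P.nsmul (n + 2) x = P.add (P.nsmul (n + 1) x) x from rfl,
      P.mul_add _ _ _ (P.nsmul_pos hx n.succ_pos) hx hy, mul_nsmul_left hx hy n.succ_pos]
    rfl

theorem mul_nsmul_right {x y : X} (hx : P.lt P.zero x) (hy : P.lt P.zero y) {n : ℕ}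
    (hn : 0 < n) : P.mul x (P.nsmul n y) = P.nsmul n (P.mul x y) := by
  rw [P.mul_comm _ _ hx (P.nsmul_pos hy hn), P.mul_nsmul_left hy hx hn, P.mul_comm _ _ hy hx]

theorem ofNat_mul {x : X} (hx : P.lt P.zero x) {n : ℕ} (hn : 0 < n) :
    P.mul (P.ofNat n) x = P.nsmul n x := by
  rw [ofNat, P.mul_nsmul_left P.zero_lt_one hx hn, P.mul_comm _ _ P.zero_lt_one hx, P.mul_one _ hx]

theorem mul_ltQ_mul {x y : X} {s t : ℚ} (hx : P.lt P.zero x) (hy : P.lt P.zero y) (hs : 0 < s)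
    (ht : 0 < t) (hxs : P.ltQ x s) (hyt : P.ltQ y t) : P.ltQ (P.mul x y) (s * t) := by
  obtain ⟨A, C, hA, hC, rfl⟩ := Rat.exists_eq_div_of_pos hs
  obtain ⟨A', C', -, hC', rfl⟩ := Rat.exists_eq_div_of_pos ht
  rw [P.ltQ_iff_of_eq_div hC rfl] at hxs
  rw [P.ltQ_iff_of_eq_div hC' rfl] at hyt
  rw [P.ltQ_iff_of_eq_div (A := A * A') (C := C * C') (by positivity)
    (by rw [div_mul_div_comm]; push_cast; rfl)]
  have hCy : P.lt P.zero (P.nsmul C' y) := P.nsmul_pos hy hC'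
  have hsplit : P.nsmul (C * C') (P.mul x y) = P.mul (P.nsmul C x) (P.nsmul C' y) := by
    rw [P.mul_nsmul_left hx hCy hC, P.mul_nsmul_right hx hy hC', P.nsmul_nsmul]
  rw [hsplit, ← P.nsmul_ofNat]
  have hA' : P.lt P.zero (P.ofNat A) := P.nsmul_pos P.zero_lt_one hA
  refine P.lt_trans ((P.mul_lt_mul_iff _ _ _ (P.nsmul_pos hx hC) hA' hCy).2 hxs) ?_
  rw [P.ofNat_mul hCy hA]
  exact P.nsmul_lt_nsmul hyt hA

theorem exists_pos_ltQ_pow {p : X} (hp : P.lt P.zero p) {s : ℚ} (hs : 0 < s) (hps : P.ltQ p s) :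
    ∀ n : ℕ, ∃ u, P.lt P.zero u ∧ P.ltQ u (s ^ (n + 1))
  | 0 => ⟨p, hp, by rwa [Nat.zero_add, pow_one]⟩
  | n + 1 =>
    let ⟨u, hu, hus⟩ := exists_pos_ltQ_pow hp hs hps n
    ⟨P.mul u p, P.mul_pos _ _ hu hp, by
      rw [pow_succ]; exact P.mul_ltQ_mul hu hp (by positivity) hs hus hps⟩

theorem exists_floor_add_ofNat (hA : P.Archimedean) (y : X) :
    ∃ j M : ℕ, ¬ P.lt (P.add y (P.ofNat j)) (P.ofNat M) ∧
      P.lt (P.add y (P.ofNat j)) (P.ofNat (M + 1)) := by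
  obtain ⟨j, hj⟩ := hA P.zero P.zero y P.one P.zero_lt_one
  rw [P.nsmul_zero, P.add_zero] at hj
  obtain ⟨k, hk⟩ := hA (P.add y (P.ofNat j)) P.zero P.zero P.one P.zero_lt_one
  rw [P.nsmul_zero, P.add_zero, P.zero_add] at hk
  exact ⟨j, Nat.exists_not_and_succ_of_not_zero_of_exists
    (p := fun m => P.lt (P.add y (P.ofNat j)) (P.ofNat m))
    (fun h0 => P.lt_asymm _ _ ⟨hj, h0⟩) ⟨k, hk⟩⟩

theorem exists_rat_btwn (hA : P.Archimedean) {a b : X} (hab : P.lt a b) :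
    ∃ q r : ℚ, q < r ∧ P.ltQ a q ∧ P.qLt r b := by
  obtain ⟨n, hn⟩ := hA (P.ofNat 2) a P.zero b hab
  rw [P.zero_add] at hn
  have hn0 : 0 < n := by
    refine Nat.pos_of_ne_zero fun h => ?_
    rw [h, P.zero_nsmul, P.zero_nsmul, P.add_zero] at hn
    exact P.lt_asymm _ _ ⟨hn, P.nsmul_pos P.zero_lt_one two_pos⟩
  -- `2 + n • a < n • b` leaves room for two consecutive multiples of `1 / n` between `a`, `b`.
  obtain ⟨j, M, hM, hM1⟩ := P.exists_floor_add_ofNat hA (P.nsmul n a)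
  refine ⟨(((M + 1 : ℕ) : ℚ) - j) / n, (((M + 2 : ℕ) : ℚ) - j) / n,
    div_lt_div_of_pos_right (by push_cast; linarith) (by positivity),
    (P.ltQ_iff hn0 rfl).2 hM1, (P.qLt_iff hn0 rfl).2 ?_⟩
  have h2 : P.lt (P.add (P.add (P.nsmul n a) (P.ofNat j)) (P.ofNat 2))
      (P.add (P.nsmul n b) (P.ofNat j)) := by
    convert P.add_lt_add_right hn (P.ofNat j) using 1
    let := P.toAddCommMonoid
    simp only [add_def]
    abel
  rw [P.ofNat_add]
  exact P.lt_of_not_lt_of_lt (mt P.lt_of_add_lt_add_right hM) h2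

theorem exists_ltQ_of_lt_zero (hA : P.Archimedean) {z : X} (hz : P.lt z P.zero) (q : ℚ) :
    ∃ y, P.ltQ y q := by
  obtain ⟨N, hN⟩ := hA (P.ofNat (-q.num).toNat) (P.nsmul q.den z) (P.ofNat q.num.toNat) P.zero
    (P.nsmul_neg hz q.den_pos)
  rw [P.nsmul_zero, P.add_zero] at hN
  refine ⟨P.nsmul N z, ?_⟩
  rwa [ltQ, P.nsmul_nsmul, Nat.mul_comm, ← P.nsmul_nsmul, P.add_comm]

theorem exists_qLt_add_nsmul (hA : P.Archimedean) {u : X} (hu : P.lt P.zero u) (q : ℚ) (y : X) :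
    ∃ k, P.qLt q (P.add y (P.nsmul k u)) := by
  obtain ⟨k, hk⟩ := hA (P.ofNat q.num.toNat) P.zero
    (P.add (P.nsmul q.den y) (P.ofNat (-q.num).toNat)) (P.nsmul q.den u) (P.nsmul_pos hu q.den_pos)
  rw [P.nsmul_zero, P.add_zero] at hk
  refine ⟨k, ?_⟩
  rw [qLt]
  convert hk using 1
  let := P.toAddCommMonoid
  simp only [add_def, nsmul_def, smul_add, smul_smul, Nat.mul_comm]
  abel

theorem exists_qLt_ltQ (hA : P.Archimedean) {q r : ℚ} (hqr : q < r) {y u : X}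
    (hy : P.ltQ y q) (hu0 : P.lt P.zero u) (hu : P.ltQ u (r - q)) :
    ∃ x, P.qLt q x ∧ P.ltQ x r := by
  obtain ⟨k, hk, hk1⟩ := Nat.exists_not_and_succ_of_not_zero_of_exists
    (p := fun k => P.qLt q (P.add y (P.nsmul k u)))
    (fun h0 => P.lt_asymm _ _ ⟨hy, by rwa [P.zero_nsmul, P.add_zero] at h0⟩)
    (P.exists_qLt_add_nsmul hA hu0 q y)
  refine ⟨_, hk1, ?_⟩
  rw [show P.add y (P.nsmul (k + 1) u) = P.add (P.add y (P.nsmul k u)) u from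
    (P.add_assoc _ _ _).symm]
  exact P.ltQ_add_of_not_qLt hqr hk hu

theorem exists_pos_ltQ (hA : P.Archimedean) {p : X} (hp0 : P.lt P.zero p) (hp1 : P.lt p P.one)
    {ε : ℚ} (hε : 0 < ε) : ∃ u, P.lt P.zero u ∧ P.ltQ u ε := by
  obtain ⟨s, t, hst, hps, ht⟩ := P.exists_rat_btwn hA hp1
  have hs0 : 0 < s := P.lt_of_qLt_of_ltQ (P.qLt_zero_iff.2 hp0) hps
  rw [← P.ofNat_one, qLt_ofNat_iff, Nat.cast_one] at ht
  have hs1 : s < 1 := hst.trans ht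
  obtain ⟨m, hm⟩ := exists_pow_lt_of_lt_one hε hs1
  obtain ⟨u, hu0, hus⟩ := P.exists_pos_ltQ_pow hp0 hs0 hps m
  exact ⟨u, hu0, P.ltQ_of_ltQ_of_lt hus
    ((pow_le_pow_of_le_one hs0.le hs1.le m.le_succ).trans_lt hm)⟩

theorem exists_lt_zero_lt_add_one (hA : P.Archimedean) {a x : X} (ha : P.lt a P.zero)
    (hx0 : P.lt P.zero x) (hx1 : P.lt x P.one) :
    ∃ z, P.lt z P.zero ∧ P.lt P.zero (P.add z P.one) := by
  obtain ⟨M, hM⟩ := hA P.zero P.zero a x hx0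
  rw [P.nsmul_zero, P.add_zero] at hM
  obtain ⟨k, hk, hk1⟩ := Nat.exists_not_and_succ_of_not_zero_of_exists
    (p := fun k => ¬ P.lt (P.add a (P.nsmul k x)) P.zero)
    (by rwa [P.zero_nsmul, P.add_zero, not_not]) ⟨M, fun h => P.lt_asymm _ _ ⟨h, hM⟩⟩
  refine ⟨_, not_not.1 hk, ?_⟩
  refine (P.lt_cotrans _ _ P.zero (P.add_lt_add_left hx1 (P.add a (P.nsmul k x)))).resolve_left ?_
  rwa [P.add_assoc]

theorem dense_of_lt_zero_lt_add_one (hA : P.Archimedean) {z : X} (hz0 : P.lt z P.zero)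
    (hz1 : P.lt P.zero (P.add z P.one)) :
    ∀ q r : ℚ, q < r → ∃ x, P.qLt q x ∧ P.ltQ x r := by
  have hp1 : P.lt (P.add z P.one) P.one := by
    simpa only [P.zero_add] using P.add_lt_add_right hz0 P.one
  intro q r hqr
  obtain ⟨u, hu0, hu⟩ := P.exists_pos_ltQ hA hz1 hp1 (sub_pos.2 hqr)
  obtain ⟨y, hy⟩ := P.exists_ltQ_of_lt_zero hA hz0 q
  exact P.exists_qLt_ltQ hA hqr hy hu0 hu

end Prestreak

theorem characterization_of_dense_streaks_general {X : Type*} (P : Prestreak X)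
    (hA : P.Archimedean) :
    List.TFAE
      [∀ q r : ℚ, q < r → ∃ x : X, P.qLt q x ∧ P.ltQ x r,
       (∃ a : X, P.ltQ a 0) ∧
         (∀ a b : X, P.lt a b → ∃ x : X, P.lt a x ∧ P.lt x b),
       (∃ a : X, P.ltQ a 0) ∧ (∃ x : X, P.qLt 0 x ∧ P.ltQ x 1),
       ∃ z : X, P.qLt (-1) z ∧ P.ltQ z 0] := by
  tfae_have 1 → 2 := fun hdense => by
    refine ⟨(hdense (-1) 0 (by norm_num)).imp fun _ hx => hx.2, fun a b hab => ?_⟩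
    obtain ⟨q, r, hqr, haq, hrb⟩ := P.exists_rat_btwn hA hab
    obtain ⟨x, hqx, hxr⟩ := hdense q r hqr
    exact ⟨x, P.lt_of_ltQ_of_qLt haq hqx, P.lt_of_ltQ_of_qLt hxr hrb⟩
  tfae_have 2 → 3 := fun ⟨hneg, hinterp⟩ => by
    obtain ⟨x, hx0, hx1⟩ := hinterp P.zero P.one P.zero_lt_one
    exact ⟨hneg, x, P.qLt_zero_iff.2 hx0, P.ltQ_one_iff.2 hx1⟩
  tfae_have 3 → 4 := fun ⟨⟨a, ha⟩, x, hx0, hx1⟩ => by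
    obtain ⟨z, hz0, hz1⟩ := P.exists_lt_zero_lt_add_one hA (P.ltQ_zero_iff.1 ha)
      (P.qLt_zero_iff.1 hx0) (P.ltQ_one_iff.1 hx1)
    exact ⟨z, P.qLt_neg_one_iff.2 hz1, P.ltQ_zero_iff.2 hz0⟩
  tfae_have 4 → 1 := fun ⟨z, hz1, hz0⟩ =>
    P.dense_of_lt_zero_lt_add_one hA (P.ltQ_zero_iff.1 hz0) (P.qLt_neg_one_iff.1 hz1)
  tfae_finish

/-- Characterization of dense streaks. -/
theorem characterization_of_dense_streaks {X : Type*} (P : Prestreak X)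
    (hA : P.Archimedean) (hT : P.Tight) :
    List.TFAE
      [∀ q r : ℚ, q < r → ∃ x : X, P.qLt q x ∧ P.ltQ x r,
       (∃ a : X, P.ltQ a 0) ∧
         (∀ a b : X, P.lt a b → ∃ x : X, P.lt a x ∧ P.lt x b),
       (∃ a : X, P.ltQ a 0) ∧ (∃ x : X, P.qLt 0 x ∧ P.ltQ x 1),
       ∃ z : X, P.qLt (-1) z ∧ P.ltQ z 0] :=
  characterization_of_dense_streaks_general P hA
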